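/- Every monotonic semantic path order is a reduction order: for every reduction triple (≳, ⊒∼, ⊐), the relation >m defined by s >m t iff s ≳ t and s >_spo t (where >_spo is the semantic path order induced from the order pair (⊒∼, ⊐)) is a well-founded strict order on terms closed under contexts and closed under substitutions. -/

import Mathlib

/-- First-order terms over a signature `F` with arity function `ar` and variables `V`. -/
inductive Term (F : Type) (ar : F → ℕ) (V : Type) : Type where
  | var : V → Term F ar V
  | app : (f : F) → (Fin (ar f) → Term F ar V) → Term F ar V

namespace Term

variable {F V : Type} {ar : F → ℕ}

/-- Application of a substitution `σ : V → Term F ar V` to a term. -/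
def subst (σ : V → Term F ar V) : Term F ar V → Term F ar V
  | var v => σ v
  | app f args => app f (fun i => (args i).subst σ)

/-- Interpretation of a term in an `F`-algebra with carrier `A` under assignment `α`. -/
def eval {A : Type} (I : (f : F) → (Fin (ar f) → A) → A) (α : V → A) :
    Term F ar V → A
  | var v => α v
  | app f args => I f (fun i => (args i).eval I α)

/-- A term is a non-variable term (function application). -/
def IsApp : Term F ar V → Prop
  | var _ => False
  | app _ _ => True

end Term

section Algebra

variable {F V A : Type}

/-- `RC lt a b` : reflexive closure of the strict order `lt`, i.e. `a ≤ b`. -/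
def RC (lt : A → A → Prop) (a b : A) : Prop := lt a b ∨ a = b

variable (ar : F → ℕ) (I : (f : F) → (Fin (ar f) → A) → A) (lt : A → A → Prop)

/-- `s >_A t` : `[α](t) < [α](s)` for every assignment `α`. -/
def GTA (s t : Term F ar V) : Prop := ∀ α : V → A, lt (t.eval I α) (s.eval I α)

/-- `s ≥_A t` : `[α](t) ≤ [α](s)` for every assignment `α`. -/
def GEA (s t : Term F ar V) : Prop := ∀ α : V → A, RC lt (t.eval I α) (s.eval I α)

/-- The algebra is simple: `f_A(a_1, …, a_n) ≥ a_i`. -/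
def Simple : Prop := ∀ (f : F) (as : Fin (ar f) → A) (i : Fin (ar f)), RC lt (as i) (I f as)

/-- The algebra is weakly monotone: `a_i > b` implies
`f_A(a_1,…,a_i,…,a_n) ≥ f_A(a_1,…,b,…,a_n)`. -/
def WeaklyMonotone : Prop :=
  ∀ (f : F) (as : Fin (ar f) → A) (i : Fin (ar f)) (b : A),
    lt b (as i) → RC lt (I f (Function.update as i b)) (I f as)

end Algebra

section WPO

variable {F V A : Type} (ar : F → ℕ) (I : (f : F) → (Fin (ar f) → A) → A)
  (lt : A → A → Prop) (prec : F → F → Prop)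

mutual
  /-- The weighted path order induced by the algebra `(A, I, lt)` and the precedence `prec`. -/
  inductive WPO : Term F ar V → Term F ar V → Prop where
    /-- (1) `s >_A t`. -/
    | alg {s t} : GTA ar I lt s t → WPO s t
    /-- (2a) `s ≥_A t` and `s_i >_wpo t`. -/
    | sub {f ss t} (i : Fin (ar f)) :
        GEA ar I lt (Term.app f ss) t → WPO (ss i) t → WPO (Term.app f ss) t
    /-- (2a) `s ≥_A t` and `s_i = t`. -/
    | subEq {f ss t} (i : Fin (ar f)) :
        GEA ar I lt (Term.app f ss) t → ss i = t → WPO (Term.app f ss) t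
    /-- (2b-i) `s ≥_A t`, `s >_wpo t_j` for all `j`, and `f ≻ g`. -/
    | prc {f ss g ts} :
        GEA ar I lt (Term.app f ss) (Term.app g ts) →
        (∀ j, WPO (Term.app f ss) (ts j)) →
        prec f g → ¬ prec g f → WPO (Term.app f ss) (Term.app g ts)
    /-- (2b-ii) `s ≥_A t`, `s >_wpo t_j` for all `j`, `f ≿ g` and lex comparison of arguments. -/
    | lex {f ss g ts} :
        GEA ar I lt (Term.app f ss) (Term.app g ts) →
        (∀ j, WPO (Term.app f ss) (ts j)) →
        prec f g → WPOLex (List.ofFn ss) (List.ofFn ts) →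
        WPO (Term.app f ss) (Term.app g ts)

  /-- Lexicographic extension of `WPO` to argument lists (of possibly different lengths). -/
  inductive WPOLex : List (Term F ar V) → List (Term F ar V) → Prop where
    | head {s t l₁ l₂} : WPO s t → WPOLex (s :: l₁) (t :: l₂)
    | tail {s l₁ l₂} : WPOLex l₁ l₂ → WPOLex (s :: l₁) (s :: l₂)
    | longer {s l₁} : WPOLex (s :: l₁) []
end

end WPO

section SPO

variable {F V : Type} {ar : F → ℕ} (qge qgt : Term F ar V → Term F ar V → Prop)

mutual
  /-- The semantic path order induced by the order pair `(qge, qgt)` (`⊒∼`, `⊐`). -/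
  inductive SPO : Term F ar V → Term F ar V → Prop where
    /-- (1) `s_i >_spo t`. -/
    | sub {f ss t} (i : Fin (ar f)) : SPO (ss i) t → SPO (Term.app f ss) t
    /-- (1) `s_i = t`. -/
    | subEq {f ss t} (i : Fin (ar f)) : ss i = t → SPO (Term.app f ss) t
    /-- (2a) `s >_spo t_j` for all `j` and `s ⊐ t`. -/
    | gt {f ss g ts} : (∀ j, SPO (Term.app f ss) (ts j)) →
        qgt (Term.app f ss) (Term.app g ts) → SPO (Term.app f ss) (Term.app g ts)
    /-- (2b) `s >_spo t_j` for all `j`, `s ⊒∼ t` and lex comparison of arguments. -/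
    | lex {f ss g ts} : (∀ j, SPO (Term.app f ss) (ts j)) →
        qge (Term.app f ss) (Term.app g ts) →
        SPOLex (List.ofFn ss) (List.ofFn ts) → SPO (Term.app f ss) (Term.app g ts)

  /-- Lexicographic extension of `SPO` to argument lists. -/
  inductive SPOLex : List (Term F ar V) → List (Term F ar V) → Prop where
    | head {s t l₁ l₂} : SPO s t → SPOLex (s :: l₁) (t :: l₂)
    | tail {s l₁ l₂} : SPOLex l₁ l₂ → SPOLex (s :: l₁) (s :: l₂)
    | longer {s l₁} : SPOLex (s :: l₁) []
end

end SPO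

section Props

variable {F V : Type} {ar : F → ℕ}

/-- Closure under contexts: replacing one argument. -/
def ClosedCtx (R : Term F ar V → Term F ar V → Prop) : Prop :=
  ∀ (f : F) (args : Fin (ar f) → Term F ar V) (i : Fin (ar f)) (s t : Term F ar V),
    R s t → R (Term.app f (Function.update args i s)) (Term.app f (Function.update args i t))

/-- Closure under substitutions. -/
def ClosedSubst (R : Term F ar V → Term F ar V → Prop) : Prop :=
  ∀ (σ : V → Term F ar V) (s t : Term F ar V), R s t → R (s.subst σ) (t.subst σ)

/-- A reduction order: a well-founded strict order closed under contexts and substitutions. -/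
def ReductionOrder (R : Term F ar V → Term F ar V → Prop) : Prop :=
  (∀ s, ¬ R s s) ∧ Transitive R ∧ WellFounded (fun s t => R t s) ∧
    ClosedCtx R ∧ ClosedSubst R

/-- `Subterm t s` : `t` is a subterm of `s`. -/
inductive Subterm : Term F ar V → Term F ar V → Prop where
  | refl {t} : Subterm t t
  | arg {t f ss} (i : Fin (ar f)) : Subterm t (ss i) → Subterm t (Term.app f ss)

/-- `ProperSubterm t s` : `t` is a proper subterm of `s`. -/
def ProperSubterm (t s : Term F ar V) : Prop :=
  ∃ (f : F) (ss : Fin (ar f) → Term F ar V) (i : Fin (ar f)),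
    s = Term.app f ss ∧ Subterm t (ss i)

/-- The rewrite relation of a TRS `R`: closure of the rules under substitutions and contexts. -/
inductive Rewrite (R : Set (Term F ar V × Term F ar V)) : Term F ar V → Term F ar V → Prop where
  | rule {l r} (σ : V → Term F ar V) : (l, r) ∈ R → Rewrite R (l.subst σ) (r.subst σ)
  | ctx {s t} (f : F) (args : Fin (ar f) → Term F ar V) (i : Fin (ar f)) :
      Rewrite R s t →
      Rewrite R (Term.app f (Function.update args i s)) (Term.app f (Function.update args i t))

end Props

section Pair

variable {F V A : Type} (ar : F → ℕ) (I : (f : F) → (Fin (ar f) → A) → A)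
  (lt : A → A → Prop) (prec : F → F → Prop)

/-- `s ⊒∼ t` : both non-variable, and `s >_A t`, or `s ≥_A t` and `root(s) ≿ root(t)`. -/
def QGE (s t : Term F ar V) : Prop :=
  ∃ (f : F) (ss : Fin (ar f) → Term F ar V) (g : F) (ts : Fin (ar g) → Term F ar V),
    s = Term.app f ss ∧ t = Term.app g ts ∧
      (GTA ar I lt s t ∨ (GEA ar I lt s t ∧ prec f g))

/-- `s ⊐ t` : both non-variable, and `s >_A t`, or `s ≥_A t` and `root(s) ≻ root(t)`. -/
def QGT (s t : Term F ar V) : Prop :=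
  ∃ (f : F) (ss : Fin (ar f) → Term F ar V) (g : F) (ts : Fin (ar g) → Term F ar V),
    s = Term.app f ss ∧ t = Term.app g ts ∧
      (GTA ar I lt s t ∨ (GEA ar I lt s t ∧ prec f g ∧ ¬ prec g f))

variable (Im : (f : F) → (Fin (ar f) → A) → A)

/-- Interpretation of the marked term `t♯` (root symbol interpreted by `Im`). -/
def evalSharp (α : V → A) : Term F ar V → A
  | .var v => α v
  | .app f ts => Im f (fun i => (ts i).eval I α)

/-- `s♯ >_A t♯`. -/
def GTAS (s t : Term F ar V) : Prop :=
  ∀ α : V → A, lt (evalSharp ar I Im α t) (evalSharp ar I Im α s)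

/-- `s♯ ≥_A t♯`. -/
def GEAS (s t : Term F ar V) : Prop :=
  ∀ α : V → A, RC lt (evalSharp ar I Im α t) (evalSharp ar I Im α s)

/-- Marked version of `⊒∼` : `s♯ >_A t♯`, or `s♯ ≥_A t♯` and `root(s) ≿ root(t)`. -/
def QGES (s t : Term F ar V) : Prop :=
  ∃ (f : F) (ss : Fin (ar f) → Term F ar V) (g : F) (ts : Fin (ar g) → Term F ar V),
    s = Term.app f ss ∧ t = Term.app g ts ∧
      (GTAS ar I lt Im s t ∨ (GEAS ar I lt Im s t ∧ prec f g))

/-- Marked version of `⊐` : `s♯ >_A t♯`, or `s♯ ≥_A t♯` and `root(s) ≻ root(t)`. -/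
def QGTS (s t : Term F ar V) : Prop :=
  ∃ (f : F) (ss : Fin (ar f) → Term F ar V) (g : F) (ts : Fin (ar g) → Term F ar V),
    s = Term.app f ss ∧ t = Term.app g ts ∧
      (GTAS ar I lt Im s t ∨ (GEAS ar I lt Im s t ∧ prec f g ∧ ¬ prec g f))

/-- The generalized weighted path order: `s ≥_A t` and `s >_spo t` for the SPO induced
from the marked order pair. -/
def GWPO (s t : Term F ar V) : Prop :=
  GEA ar I lt s t ∧ SPO (QGES ar I lt prec Im) (QGTS ar I lt prec Im) s t

end Pair

/-!
Transitivity and stability under substitutions of `>_spo` go by induction on the total size of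
the terms involved. Closure under contexts of `>ₘ` is where harmony enters: a `≳`-step in one
argument keeps the root `⊒∼`-related, the argument lists decrease lexicographically, and every
new argument lies below the old term. Well-foundedness is the usual path-order argument: if all
arguments of `g(ts)` are accessible then so is `g(ts)`, by induction on a `⊐`-accessible term
that `⊒∼`-dominates it and then on the lexicographic order of argument lists, which is
well-founded on lists of accessible elements once their length is bounded (finite signature).
-/

namespace Term

variable {F V : Type} {ar : F → ℕ}

def size : Term F ar V → ℕ
  | var _ => 1
  | app _ args => 1 + ∑ i, (args i).size

lemma size_arg_lt {f : F} (args : Fin (ar f) → Term F ar V) (i : Fin (ar f)) :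
    (args i).size < (app f args).size := by
  have := Finset.single_le_sum (f := fun j => (args j).size) (fun j _ => Nat.zero_le _)
    (Finset.mem_univ i)
  simp only [size]
  omega

lemma size_lt_of_mem_ofFn {f : F} {args : Fin (ar f) → Term F ar V} {a : Term F ar V}
    (h : a ∈ List.ofFn args) : a.size < (app f args).size := by
  obtain ⟨i, rfl⟩ := List.mem_ofFn.mp h
  exact size_arg_lt args i

end Term

namespace List

variable {α : Type*} (r : α → α → Prop)

/-- The lexicographic order restricted to lists of length at most `n` with `r`-accessible
entries. Without the length bound it is not well-founded: `[1] > [0, 1] > [0, 0, 1] > ⋯`. -/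
def BoundedLex (n : ℕ) (l' l : List α) : Prop :=
  Lex r l' l ∧ l'.length ≤ n ∧ ∀ x ∈ l', Acc r x

variable {r}

lemma acc_boundedLex_nil (n : ℕ) : Acc (BoundedLex r n) [] :=
  Acc.intro _ fun _ h => absurd h.1 not_lex_nil

lemma acc_boundedLex {n : ℕ} {l : List α} (hl : l.length ≤ n) (hacc : ∀ x ∈ l, Acc r x) :
    Acc (BoundedLex r n) l := by
  induction n generalizing l with
  | zero => rw [eq_nil_of_length_eq_zero (Nat.le_zero.mp hl)]; exact acc_boundedLex_nil 0
  | succ n ihn =>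
    cases l with
    | nil => exact acc_boundedLex_nil _
    | cons a tl =>
      have hacc_tl : Acc (BoundedLex r n) tl :=
        ihn (by simpa using hl) fun x hx => hacc x (mem_cons_of_mem _ hx)
      clear hl
      induction hacc a mem_cons_self generalizing tl with
      | intro a _ ih_a =>
        induction hacc_tl with
        | intro tl _ ih_tl =>
          refine Acc.intro _ fun l' ⟨hlex, hlen, hacc'⟩ => ?_
          cases hlex with
          | nil => exact acc_boundedLex_nil _
          | @rel b l₂ _ _ hba =>
            exact ih_a b hba l₂ hacc'
              (ihn (by simpa using hlen) fun x hx => hacc' x (mem_cons_of_mem _ hx))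
          | cons hlex' =>
            exact ih_tl _ ⟨hlex', by simpa using hlen, fun x hx => hacc' x (mem_cons_of_mem _ hx)⟩
              hacc'

lemma acc_boundedLex_ofFn {n m : ℕ} (hm : m ≤ n) {ts : Fin m → α} (hts : ∀ j, Acc r (ts j)) :
    Acc (BoundedLex r n) (ofFn ts) :=
  acc_boundedLex (by simpa using hm) fun x hx => by
    obtain ⟨j, rfl⟩ := mem_ofFn.mp hx
    exact hts j

end List

section SemanticPathOrder

variable {F V : Type} {ar : F → ℕ} {qge qgt : Term F ar V → Term F ar V → Prop}

mutual

theorem SPO.subst (qge_subst : ClosedSubst qge) (qgt_subst : ClosedSubst qgt)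
    (σ : V → Term F ar V) {s t : Term F ar V} :
    SPO qge qgt s t → SPO qge qgt (s.subst σ) (t.subst σ)
  | .sub i h => .sub i (h.subst qge_subst qgt_subst σ)
  | .subEq i e => .subEq i (congrArg (Term.subst σ) e)
  | .gt hts hgt => .gt (fun j => (hts j).subst qge_subst qgt_subst σ) (qgt_subst σ _ _ hgt)
  | .lex hts hge hlex => .lex (fun j => (hts j).subst qge_subst qgt_subst σ)
      (qge_subst σ _ _ hge) (by
        simpa only [List.map_ofFn, Function.comp_def] using hlex.map_subst qge_subst qgt_subst σ)

theorem SPOLex.map_subst (qge_subst : ClosedSubst qge) (qgt_subst : ClosedSubst qgt)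
    (σ : V → Term F ar V) {l₁ l₂ : List (Term F ar V)} :
    SPOLex qge qgt l₁ l₂ → SPOLex qge qgt (l₁.map (Term.subst σ)) (l₂.map (Term.subst σ))
  | .head h => .head (h.subst qge_subst qgt_subst σ)
  | .tail h => .tail (h.map_subst qge_subst qgt_subst σ)
  | .longer => .longer

end

theorem SPOLex.lex {l₁ l₂ : List (Term F ar V)} :
    SPOLex qge qgt l₁ l₂ → List.Lex (fun a b => SPO qge qgt b a) l₂ l₁
  | .head h => .rel h
  | .tail h => .cons h.lex
  | .longer => .nil

open List in
theorem SPOLex.trans_of_mem {l₁ l₂ l₃ : List (Term F ar V)}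
    (H : ∀ a ∈ l₁, ∀ b ∈ l₂, ∀ c ∈ l₃, SPO qge qgt a b → SPO qge qgt b c → SPO qge qgt a c) :
    SPOLex qge qgt l₁ l₂ → SPOLex qge qgt l₂ l₃ → SPOLex qge qgt l₁ l₃
  | .head hab, .head hbc => .head (H _ mem_cons_self _ mem_cons_self _ mem_cons_self hab hbc)
  | .head hab, .tail _ => .head hab
  | .tail _, .head hac => .head hac
  | .tail h₁, .tail h₂ => .tail (trans_of_mem (fun a ha b hb c hc =>
      H a (mem_cons_of_mem _ ha) b (mem_cons_of_mem _ hb) c (mem_cons_of_mem _ hc)) h₁ h₂)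
  | .head _, .longer | .tail _, .longer => .longer

theorem SPO.trans (qge_refl : ∀ t : Term F ar V, t.IsApp → qge t t)
    (qge_trans : ∀ ⦃a b c⦄, qge a b → qge b c → qge a c)
    (qgt_trans : ∀ ⦃a b c⦄, qgt a b → qgt b c → qgt a c)
    (compat : ∀ s t u v, qge s t → qgt t u → qge u v → qgt s v)
    {s t u : Term F ar V} : SPO qge qgt s t → SPO qge qgt t u → SPO qge qgt s u
  | .sub i h, h₂ => .sub i (h.trans qge_refl qge_trans qgt_trans compat h₂)
  | .subEq i e, h₂ => .sub i (e ▸ h₂)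
  | .gt hts _, .sub i h | .lex hts _ _, .sub i h =>
      (hts i).trans qge_refl qge_trans qgt_trans compat h
  | .gt hts _, .subEq i e | .lex hts _ _, .subEq i e => e ▸ hts i
  | h₁@(.gt _ hgt), .gt hus hgt₂ =>
      .gt (fun i => h₁.trans qge_refl qge_trans qgt_trans compat (hus i)) (qgt_trans hgt hgt₂)
  | h₁@(.gt _ hgt), .lex hus hge₂ _ =>
      .gt (fun i => h₁.trans qge_refl qge_trans qgt_trans compat (hus i))
        (compat _ _ _ _ (qge_refl _ trivial) hgt hge₂)
  | h₁@(.lex _ hge _), .gt hus hgt₂ =>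
      .gt (fun i => h₁.trans qge_refl qge_trans qgt_trans compat (hus i))
        (compat _ _ _ _ hge hgt₂ (qge_refl _ trivial))
  | h₁@(.lex _ hge hlex), .lex hus hge₂ hlex₂ =>
      .lex (fun i => h₁.trans qge_refl qge_trans qgt_trans compat (hus i)) (qge_trans hge hge₂)
        (hlex.trans_of_mem (fun _ _ _ _ _ _ hab hbc =>
          hab.trans qge_refl qge_trans qgt_trans compat hbc) hlex₂)
termination_by s.size + t.size + u.size
decreasing_by
  all_goals
    gcongr <;> first | exact Term.size_arg_lt _ _ | exact Term.size_lt_of_mem_ofFn ‹_›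

theorem SPOLex.ofFn {n : ℕ} {as bs : Fin n → Term F ar V} (i : Fin n)
    (h_ne : ∀ j, j ≠ i → as j = bs j) (h : SPO qge qgt (as i) (bs i)) :
    SPOLex qge qgt (List.ofFn as) (List.ofFn bs) := by
  induction n with
  | zero => exact i.elim0
  | succ n ih =>
    rw [List.ofFn_succ, List.ofFn_succ]
    rcases Fin.eq_zero_or_eq_succ i with rfl | ⟨i, rfl⟩
    · exact .head h
    · rw [h_ne 0 (Fin.succ_ne_zero i).symm]
      exact .tail (ih i (fun j hj => h_ne j.succ (Fin.succ_injective _ |>.ne hj)) h)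

theorem SPO.app_update_of_qge {f : F} (args : Fin (ar f) → Term F ar V) (i : Fin (ar f))
    {s t : Term F ar V} (h : SPO qge qgt s t)
    (hge : qge (.app f (Function.update args i s)) (.app f (Function.update args i t))) :
    SPO qge qgt (.app f (Function.update args i s)) (.app f (Function.update args i t)) := by
  refine .lex (fun j => ?_) hge (SPOLex.ofFn i (fun j hj => ?_) ?_)
  · by_cases hj : j = i
    · subst hj
      exact .sub j (by simpa using h)
    · exact .subEq j (by simp [hj])
  · simp [hj]
  · simpa using h

theorem SPO.acc_app_of_qge (qge_refl : ∀ t : Term F ar V, t.IsApp → qge t t)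
    (qge_trans : ∀ ⦃a b c⦄, qge a b → qge b c → qge a c)
    (compat : ∀ s t u v, qge s t → qgt t u → qge u v → qgt s v)
    {B : ℕ} (hB : ∀ f, ar f ≤ B) {s : Term F ar V} (hs : Acc (fun a b => qgt b a) s)
    {l : List (Term F ar V)} (hl : Acc (List.BoundedLex (fun a b => SPO qge qgt b a) B) l)
    {g : F} {ts : Fin (ar g) → Term F ar V} (hl_eq : l = List.ofFn ts)
    (hts : ∀ j, Acc (fun a b => SPO qge qgt b a) (ts j)) (hsg : qge s (Term.app g ts)) :
    Acc (fun a b => SPO qge qgt b a) (Term.app g ts) := by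
  induction hs generalizing l g ts with | intro s _ ih_s =>
  induction hl generalizing g ts with | intro l _ ih_l =>
  subst hl_eq
  refine Acc.intro _ fun u hu => ?_
  induction u with
  | var v =>
    rcases hu with ⟨i, h⟩ | ⟨i, e⟩
    · exact (hts i).inv h
    · exact e ▸ hts i
  | app h us ih_us =>
    rcases hu with ⟨i, h⟩ | ⟨i, e⟩ | ⟨hus, hgt⟩ | ⟨hus, hge, hlex⟩
    · exact (hts i).inv h
    · exact e ▸ hts i
    · have hus_acc := fun k => ih_us k (hus k)
      exact ih_s _ (compat _ _ _ _ hsg hgt (qge_refl _ trivial))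
        (List.acc_boundedLex_ofFn (hB h) hus_acc) rfl hus_acc (qge_refl _ trivial)
    · have hus_acc := fun k => ih_us k (hus k)
      refine ih_l _ ⟨hlex.lex, by simpa using hB h, fun x hx => ?_⟩ rfl hus_acc
        (qge_trans hsg hge)
      obtain ⟨k, rfl⟩ := List.mem_ofFn.mp hx
      exact hus_acc k

theorem SPO.wellFounded (qge_refl : ∀ t : Term F ar V, t.IsApp → qge t t)
    (qge_trans : ∀ ⦃a b c⦄, qge a b → qge b c → qge a c)
    (compat : ∀ s t u v, qge s t → qgt t u → qge u v → qgt s v)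
    (qgt_wf : WellFounded (fun s t => qgt t s)) {B : ℕ} (hB : ∀ f, ar f ≤ B) :
    WellFounded (fun s t => SPO qge qgt t s) := by
  refine ⟨fun t => ?_⟩
  induction t with
  | var v => exact Acc.intro _ fun _ h => nomatch h
  | app f ss ih =>
    exact acc_app_of_qge qge_refl qge_trans compat hB (qgt_wf.apply _)
      (List.acc_boundedLex_ofFn (hB f) ih) rfl ih (qge_refl _ trivial)

end SemanticPathOrder

/-- Every monotonic semantic path order is a reduction order: for every
reduction triple `(ge, qge, qgt)` — `ge` a rewrite preorder, `(qge, qgt)` a stable order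
pair on non-variable terms with `qgt` well-founded, and `ge`, `qge` in harmony — the
relation `s >ₘ t` iff `ge s t ∧ SPO qge qgt s t` is a reduction order. -/
theorem mspo_is_reduction_order
    {F V : Type} [Fintype F] [Countable V] [Infinite V] {ar : F → ℕ}
    (ge qge qgt : Term F ar V → Term F ar V → Prop)
    -- `ge` is a rewrite preorder
    (ge_refl : ∀ t, ge t t) (ge_trans : Transitive ge)
    (ge_ctx : ClosedCtx ge) (ge_subst : ClosedSubst ge)
    -- `(qge, qgt)` is an order pair on non-variable terms
    (qge_dom : ∀ s t, qge s t → s.IsApp ∧ t.IsApp)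
    (qgt_dom : ∀ s t, qgt s t → s.IsApp ∧ t.IsApp)
    (qge_refl : ∀ t : Term F ar V, t.IsApp → qge t t)
    (qge_trans : Transitive qge)
    (qgt_irrefl : ∀ s, ¬ qgt s s) (qgt_trans : Transitive qgt)
    (compat : ∀ s t u v, qge s t → qgt t u → qge u v → qgt s v)
    -- stability
    (qge_subst : ClosedSubst qge) (qgt_subst : ClosedSubst qgt)
    -- `qgt` is well-founded
    (qgt_wf : WellFounded (fun s t => qgt t s))
    -- harmony of `ge` and `qge`
    (harmony : ∀ (f : F) (ss : Fin (ar f) → Term F ar V) (i : Fin (ar f))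
      (t : Term F ar V), ge (ss i) t →
        qge (Term.app f ss) (Term.app f (Function.update ss i t))) :
    ReductionOrder (fun s t => ge s t ∧ SPO qge qgt s t) := by
  have wf : WellFounded fun s t => ge t s ∧ SPO qge qgt t s :=
    Subrelation.wf (fun h => h.2) <| SPO.wellFounded qge_refl qge_trans compat qgt_wf
      fun f => Finset.le_sup (Finset.mem_univ f)
  refine ⟨wf.irrefl.irrefl, fun s t u h₁ h₂ => ⟨ge_trans h₁.1 h₂.1, ?_⟩, wf,
    fun f args i s t h => ⟨ge_ctx f args i s t h.1, ?_⟩,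
    fun σ s t h => ⟨ge_subst σ s t h.1, h.2.subst qge_subst qgt_subst σ⟩⟩
  · exact h₁.2.trans qge_refl qge_trans qgt_trans compat h₂.2
  · refine h.2.app_update_of_qge args i ?_
    simpa using harmony f (Function.update args i s) i t (by simpa using h.1)
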